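/- Energy identity for the transformed quantum system: if (ρ, w) is a smooth solution of ∂_tρ + div(ρw) = μΔρ and ∂_t(ρw) + div(ρw⊗w) − μΔ(ρw) − 2λ div(ρDw) = 0 on the torus with ρ > 0, then d/dt ∫_Ω ρ|w|²/2 dx + 2λ∫_Ω ρ|Dw|² dx + μ∫_Ω ρ|∇w|² dx = 0. -/

import Mathlib

open MeasureTheory Real Filter

noncomputable section

/-- Partial derivative in direction `i` of a scalar field on `ℝ^d`. -/
def pd {d : ℕ} (i : Fin d) (f : (Fin d → ℝ) → ℝ) (x : Fin d → ℝ) : ℝ :=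
  fderiv ℝ f x (Pi.single i 1)

/-- Laplacian of a scalar field on `ℝ^d`. -/
def lap {d : ℕ} (f : (Fin d → ℝ) → ℝ) (x : Fin d → ℝ) : ℝ :=
  ∑ i, pd i (pd i f) x

/-- Fundamental domain of the torus `𝕋^d = ℝ^d / ℤ^d`. -/
def box (d : ℕ) : Set (Fin d → ℝ) := Set.univ.pi fun _ => Set.Icc 0 1


variable {d : ℕ}

theorem contDiff_pd {f : (Fin d → ℝ) → ℝ} (hf : ContDiff ℝ (⊤ : ℕ∞) f) (i : Fin d) :
    ContDiff ℝ (⊤ : ℕ∞) (pd i f) :=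
  (hf.fderiv_right (by simp)).clm_apply contDiff_const

theorem pd_mul {f g : (Fin d → ℝ) → ℝ} (hf : ContDiff ℝ (⊤ : ℕ∞) f) (hg : ContDiff ℝ (⊤ : ℕ∞) g)
    (i : Fin d) (x : Fin d → ℝ) :
    pd i (fun y => f y * g y) x = pd i f x * g x + f x * pd i g x := by
  have := fderiv_fun_mul (𝕜 := ℝ) (hf.differentiable (by simp) x) (hg.differentiable (by simp) x)
  simp only [pd, this]
  simp only [ContinuousLinearMap.add_apply, ContinuousLinearMap.smul_apply, smul_eq_mul]
  ring

theorem pd_sum {ι : Type*} (s : Finset ι) {f : ι → (Fin d → ℝ) → ℝ}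
    (hf : ∀ j, ContDiff ℝ (⊤ : ℕ∞) (f j)) (i : Fin d) (x : Fin d → ℝ) :
    pd i (fun y => ∑ j ∈ s, f j y) x = ∑ j ∈ s, pd i (f j) x := by
  have := fderiv_fun_sum (𝕜 := ℝ) (u := s) (A := fun j => f j)
    (fun j _ => (hf j).differentiable (by simp) x)
  simp only [pd, this]
  simp

theorem pd_add {f g : (Fin d → ℝ) → ℝ} (hf : ContDiff ℝ (⊤ : ℕ∞) f) (hg : ContDiff ℝ (⊤ : ℕ∞) g)
    (i : Fin d) (x : Fin d → ℝ) :
    pd i (fun y => f y + g y) x = pd i f x + pd i g x := by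
  simp only [pd, fderiv_fun_add (hf.differentiable (by simp) x)
    (hg.differentiable (by simp) x)]
  simp

theorem pd_div_const {f : (Fin d → ℝ) → ℝ} (hf : ContDiff ℝ (⊤ : ℕ∞) f) (c : ℝ) (i : Fin d) (x : Fin d → ℝ) :
    pd i (fun y => f y / c) x = pd i f x / c := by
  simp only [pd, div_eq_mul_inv, fderiv_mul_const ((hf.differentiable (by simp) x) : DifferentiableAt ℝ f x)]
  simp [mul_comm]

theorem pd_const_mul {f : (Fin d → ℝ) → ℝ} (hf : ContDiff ℝ (⊤ : ℕ∞) f) (c : ℝ) (i : Fin d) (x : Fin d → ℝ) :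
    pd i (fun y => c * f y) x = c * pd i f x := by
  simp only [pd, fderiv_const_mul ((hf.differentiable (by simp) x) : DifferentiableAt ℝ f x) c]
  simp

theorem fderiv_periodic {f : (Fin d → ℝ) → ℝ} (hf : ContDiff ℝ (⊤ : ℕ∞) f)
    (hper : ∀ x k, f (x + Pi.single k 1) = f x) (x : Fin d → ℝ) (k : Fin d) :
    fderiv ℝ f (x + Pi.single k 1) = fderiv ℝ f x := by
  have h1 : HasFDerivAt (fun y : Fin d → ℝ => y + Pi.single k 1)
      (ContinuousLinearMap.id ℝ (Fin d → ℝ)) x := (hasFDerivAt_id x).add_const _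
  have h2 : HasFDerivAt f (fderiv ℝ f (x + Pi.single k 1)) (x + Pi.single k 1) :=
    (hf.differentiable (by simp) _).hasFDerivAt
  have h3 := h2.comp x h1
  have h4 : (fun y => f (y + Pi.single k 1)) = f := by funext y; rw [hper]
  rw [ContinuousLinearMap.comp_id] at h3
  have h5 : HasFDerivAt f (fderiv ℝ f (x + Pi.single k 1)) x := by
    rwa [show f ∘ (fun y : Fin d → ℝ => y + Pi.single k 1) = f from h4] at h3
  exact h5.fderiv.symm

theorem pd_periodic {f : (Fin d → ℝ) → ℝ} (hf : ContDiff ℝ (⊤ : ℕ∞) f)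
    (hper : ∀ x k, f (x + Pi.single k 1) = f x)
    (i : Fin d) (x : Fin d → ℝ) (k : Fin d) :
    pd i f (x + Pi.single k 1) = pd i f x := by
  rw [pd, pd, fderiv_periodic hf hper]

-- slice lemmas
theorem contDiff_slice {F : ℝ × (Fin d → ℝ) → ℝ} (hF : ContDiff ℝ (⊤ : ℕ∞) F) (t : ℝ) :
    ContDiff ℝ (⊤ : ℕ∞) (fun y => F (t, y)) :=
  hF.comp (contDiff_const.prodMk contDiff_id)

theorem hasDerivAt_slice {F : ℝ × (Fin d → ℝ) → ℝ} (hF : ContDiff ℝ (⊤ : ℕ∞) F)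
    (t : ℝ) (x : Fin d → ℝ) :
    HasDerivAt (fun s => F (s, x)) (fderiv ℝ F (t, x) (1, 0)) t := by
  have h1 : HasFDerivAt F (fderiv ℝ F (t, x)) (t, x) :=
    (hF.differentiable (by simp) _).hasFDerivAt
  have h2 : HasFDerivAt (fun s : ℝ => (s, x)) ((ContinuousLinearMap.id ℝ ℝ).prod 0) t :=
    (hasFDerivAt_id t).prodMk (hasFDerivAt_const x t)
  have h3 := h1.comp t h2
  have := h3.hasDerivAt
  simpa [Function.comp_def] using this

theorem deriv_slice {F : ℝ × (Fin d → ℝ) → ℝ} (hF : ContDiff ℝ (⊤ : ℕ∞) F)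
    (t : ℝ) (x : Fin d → ℝ) :
    deriv (fun s => F (s, x)) t = fderiv ℝ F (t, x) (1, 0) :=
  (hasDerivAt_slice hF t x).deriv

theorem pd_slice {F : ℝ × (Fin d → ℝ) → ℝ} (hF : ContDiff ℝ (⊤ : ℕ∞) F)
    (t : ℝ) (x : Fin d → ℝ) (i : Fin d) :
    pd i (fun y => F (t, y)) x = fderiv ℝ F (t, x) (0, Pi.single i 1) := by
  have h1 : HasFDerivAt F (fderiv ℝ F (t, x)) (t, x) :=
    (hF.differentiable (by simp) _).hasFDerivAt
  have h2 : HasFDerivAt (fun y : Fin d → ℝ => (t, y))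
      ((0 : (Fin d → ℝ) →L[ℝ] ℝ).prod (ContinuousLinearMap.id ℝ _)) x :=
    (hasFDerivAt_const t x).prodMk (hasFDerivAt_id x)
  have h3 : HasFDerivAt (fun y => F (t, y))
      ((fderiv ℝ F (t, x)).comp ((0 : (Fin d → ℝ) →L[ℝ] ℝ).prod (ContinuousLinearMap.id ℝ _))) x :=
    h1.comp x h2
  rw [pd, h3.fderiv]
  simp

-- box facts
theorem box_eq_Icc : box d = Set.Icc (0 : Fin d → ℝ) 1 := by
  rw [box, ← Set.pi_univ_Icc]; rfl

theorem isCompact_box : IsCompact (box d) := by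
  rw [box_eq_Icc]; exact isCompact_Icc

theorem measurableSet_box : MeasurableSet (box d) := by
  rw [box_eq_Icc]; exact measurableSet_Icc

-- differentiation under the integral sign
theorem hasDerivAt_integral_box {F : ℝ × (Fin d → ℝ) → ℝ} (hF : ContDiff ℝ (⊤ : ℕ∞) F) (t : ℝ) :
    HasDerivAt (fun s => ∫ x in box d, F (s, x))
      (∫ x in box d, fderiv ℝ F (t, x) (1, 0)) t := by
  set G : ℝ × (Fin d → ℝ) → ℝ := fun p => fderiv ℝ F p (1, 0) with hG
  have hGc : Continuous G := ((hF.fderiv_right (m := (⊤ : ℕ∞)) (by simp)).clm_apply contDiff_const).continuous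
  have hK : IsCompact ((Set.Icc (t - 1) (t + 1)) ×ˢ box d) :=
    isCompact_Icc.prod isCompact_box
  obtain ⟨M, hM⟩ := hK.exists_bound_of_continuousOn hGc.continuousOn
  have key := hasDerivAt_integral_of_dominated_loc_of_deriv_le (𝕜 := ℝ)
    (μ := volume.restrict (box d)) (F := fun s x => F (s, x))
    (F' := fun s x => G (s, x)) (x₀ := t) (bound := fun _ => M)
    (s := Metric.ball t 1) (Metric.ball_mem_nhds t one_pos)
    (Eventually.of_forall fun s =>
      (hF.continuous.comp (Continuous.prodMk_right s)).aestronglyMeasurable)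
    ?_ ((hGc.comp (Continuous.prodMk_right t)).aestronglyMeasurable) ?_ ?_ ?_
  · exact key.2
  · exact (hF.continuous.comp (Continuous.prodMk_right t)).continuousOn.integrableOn_compact isCompact_box
  · refine (ae_restrict_mem measurableSet_box).mono fun x hx => fun s hs => ?_
    exact hM (s, x) ⟨by constructor <;> [linarith [abs_le.1 (le_of_lt (by simpa [Real.dist_eq] using hs))|>.1]; linarith [abs_le.1 (le_of_lt (by simpa [Real.dist_eq] using hs))|>.2]], hx⟩
  · exact integrableOn_const isCompact_box.measure_lt_top.ne
  · exact Eventually.of_forall fun x => fun s _ => hasDerivAt_slice hF s x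

theorem insertNth_zero_add_single {n : ℕ} (i : Fin (n + 1)) (x : Fin n → ℝ) :
    (@Fin.insertNth n (fun _ => ℝ) i 0 x) + Pi.single i 1
      = @Fin.insertNth n (fun _ => ℝ) i 1 x := by
  funext j
  rcases eq_or_ne j i with rfl | hj
  · simp
  · rcases Fin.exists_succAbove_eq hj with ⟨m, rfl⟩
    simp [Fin.insertNth_apply_succAbove, Pi.single_eq_of_ne (Fin.succAbove_ne i m)]

/-- Integral of a divergence of a smooth periodic vector field over the unit box is zero. -/
theorem integral_divergence_zero {d : ℕ} (V : Fin d → (Fin d → ℝ) → ℝ)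
    (hV : ∀ i, ContDiff ℝ (⊤ : ℕ∞) (V i))
    (hVper : ∀ i x k, V i (x + Pi.single k 1) = V i x) :
    ∫ x in box d, ∑ i, pd i (V i) x = 0 := by
  cases d with
  | zero => simp
  | succ n =>
    rw [box_eq_Icc]
    have key := MeasureTheory.integral_divergence_of_hasFDerivAt_off_countable'
      (a := (0 : Fin (n + 1) → ℝ)) (b := 1) (E := ℝ)
      (fun i => zero_le_one) V (fun i x => fderiv ℝ (V i) x) ∅ Set.countable_empty
      (fun i => (hV i).continuous.continuousOn)
      (fun x _ i => ((hV i).differentiable (by simp) x).hasFDerivAt)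
      (by
        apply ContinuousOn.integrableOn_compact isCompact_Icc
        exact (continuous_finset_sum _ fun i _ =>
          (((hV i).fderiv_right (m := (⊤ : ℕ∞)) (by simp)).clm_apply contDiff_const).continuous).continuousOn)
    rw [show (∫ x in Set.Icc (0:Fin (n+1) → ℝ) 1, ∑ i, pd i (V i) x)
        = ∫ x in Set.Icc (0:Fin (n+1) → ℝ) 1, ∑ i, fderiv ℝ (V i) x (Pi.single i 1) from rfl]
    simp only [Pi.one_apply, Pi.zero_apply] at key
    rw [key]
    apply Finset.sum_eq_zero
    intro i _
    rw [sub_eq_zero]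
    apply setIntegral_congr_fun measurableSet_Icc
    intro x _
    show V i (@Fin.insertNth n (fun _ => ℝ) i 1 x) = V i (@Fin.insertNth n (fun _ => ℝ) i 0 x)
    rw [← insertNth_zero_add_single, hVper]

theorem sum_antisym_zero {d : ℕ} (f : Fin d → Fin d → ℝ)
    (h : ∀ i j, f i j + f j i = 0) : ∑ i, ∑ j, f i j = 0 := by
  have h1 : (∑ i, ∑ j, f i j) = ∑ i, ∑ j, f j i := Finset.sum_comm
  have h2 : (∑ i, ∑ j, (f i j + f j i)) = (0 : ℝ) :=
    Finset.sum_eq_zero fun i _ => Finset.sum_eq_zero fun j _ => h i j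
  simp only [Finset.sum_add_distrib] at h2
  linarith

theorem energy_algebra {d : ℕ} (μ lam r a S : ℝ) (W b R H L : Fin d → ℝ)
    (G M K1 K2 : Fin d → Fin d → ℝ)
    (hS : S = ∑ j, W j ^ 2)
    (ha : a = μ * (∑ i, H i) - ∑ i, (R i * W i + r * G i i))
    (hL : ∀ j, L j = ∑ i, M i j)
    (hb : ∀ j, r * b j = μ * L j
      + 2 * lam * (∑ i, (R i * ((G i j + G j i) / 2) + r * ((K1 i j + K2 i j) / 2)))
      - (∑ i, ((R i * W j + r * G i j) * W i + r * W j * G i i)) - a * W j) :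
    (a * S + r * (∑ j, 2 * W j * b j)) / 2
      = (∑ i,
          (-((R i * W i + r * G i i) * S + r * W i * (∑ j, 2 * W j * G i j)) / 2
           + μ * ((∑ j, (G i j * (R i * W j + r * G i j) + W j * M i j))
                  - ((∑ j, 2 * W j * G i j) / 2 * R i + S / 2 * H i))
           + 2 * lam * (∑ j, ((R i * W j + r * G i j) * ((G i j + G j i) / 2)
                  + r * W j * ((K1 i j + K2 i j) / 2)))))
        - (2 * lam * (r * ∑ i, ∑ j, ((G i j + G j i) / 2) ^ 2)
           + μ * (r * ∑ i, ∑ j, (G i j) ^ 2)) := by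
  have lhs2 : r * (∑ j, 2 * W j * b j)
      = ∑ j, 2 * W j * (μ * (∑ i, M i j)
        + 2 * lam * (∑ i, (R i * ((G i j + G j i) / 2) + r * ((K1 i j + K2 i j) / 2)))
        - (∑ i, ((R i * W j + r * G i j) * W i + r * W j * G i i)) - a * W j) := by
    rw [Finset.mul_sum]
    refine Finset.sum_congr rfl fun j _ => ?_
    rw [show r * (2 * W j * b j) = 2 * W j * (r * b j) by ring, hb j, hL j]
  rw [lhs2, hS, ha, ← sub_eq_zero]
  simp only [Finset.mul_sum, Finset.sum_mul, Finset.sum_div, Finset.sum_add_distrib,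
    Finset.sum_sub_distrib, mul_add, add_mul, mul_sub, sub_mul, neg_add, neg_sub,
    sub_div, add_div, neg_div, Finset.sum_neg_distrib, sub_eq_add_neg, neg_mul, mul_neg,
    neg_neg]
  simp only [← Finset.sum_neg_distrib, ← Finset.sum_add_distrib]
  exact sum_antisym_zero _ fun i j => by ring


theorem pd_neg {f : (Fin d → ℝ) → ℝ} (i : Fin d) (x : Fin d → ℝ) :
    pd i (fun y => -f y) x = -pd i f x := by
  simp only [pd, fderiv_neg]
  simp

theorem pd_sub {f g : (Fin d → ℝ) → ℝ} (hf : ContDiff ℝ (⊤ : ℕ∞) f) (hg : ContDiff ℝ (⊤ : ℕ∞) g)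
    (i : Fin d) (x : Fin d → ℝ) :
    pd i (fun y => f y - g y) x = pd i f x - pd i g x := by
  simp only [pd, fderiv_fun_sub (hf.differentiable (by simp) x) (hg.differentiable (by simp) x)]
  simp

theorem pd_sq {f : (Fin d → ℝ) → ℝ} (hf : ContDiff ℝ (⊤ : ℕ∞) f) (i : Fin d) (x : Fin d → ℝ) :
    pd i (fun y => f y ^ 2) x = 2 * f x * pd i f x := by
  have h : (fun y => f y ^ 2) = fun y => f y * f y := by funext y; ring
  rw [h, pd_mul hf hf]; ring

/-- Energy identity for the transformed quantum system:
`d/dt ∫ ρ|w|²/2 + 2λ∫ρ|Dw|² + μ∫ρ|∇w|² = 0` on the torus. -/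
theorem transformed_energy_identity {d : ℕ} (μ lam : ℝ) (hμ : 0 < μ) (hlam : 0 < lam)
    (ρ : ℝ → (Fin d → ℝ) → ℝ) (w : ℝ → (Fin d → ℝ) → Fin d → ℝ)
    (hρ : ContDiff ℝ (⊤ : ℕ∞) fun p : ℝ × (Fin d → ℝ) => ρ p.1 p.2)
    (hw : ∀ j, ContDiff ℝ (⊤ : ℕ∞) fun p : ℝ × (Fin d → ℝ) => w p.1 p.2 j)
    (hpos : ∀ t x, 0 < ρ t x)
    (hper : ∀ t x k, ρ t (x + Pi.single k 1) = ρ t x)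
    (hwper : ∀ t x k, w t (x + Pi.single k 1) = w t x)
    (hcont : ∀ t x, deriv (fun s => ρ s x) t
        + ∑ i, pd i (fun y => ρ t y * w t y i) x = μ * lap (ρ t) x)
    (hmom : ∀ t x (j : Fin d),
        deriv (fun s => ρ s x * w s x j) t
        + ∑ i, pd i (fun y => ρ t y * w t y j * w t y i) x
        - μ * lap (fun y => ρ t y * w t y j) x
        - 2 * lam * ∑ i, pd i (fun y => ρ t y *
            ((pd i (fun z => w t z j) y + pd j (fun z => w t z i) y) / 2)) x = 0) :
    ∀ t : ℝ,
      deriv (fun s => ∫ x in box d, ρ s x * (∑ j, (w s x j) ^ 2) / 2) t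
      + 2 * lam * (∫ x in box d, ρ t x * ∑ i, ∑ j,
          ((pd i (fun z => w t z j) x + pd j (fun z => w t z i) x) / 2) ^ 2)
      + μ * (∫ x in box d, ρ t x * ∑ i, ∑ j, (pd i (fun z => w t z j) x) ^ 2)
      = 0 := by
  intro t
  have hRt : ContDiff ℝ (⊤ : ℕ∞) (ρ t) := hρ.comp (contDiff_const.prodMk contDiff_id)
  have hWt : ∀ j, ContDiff ℝ (⊤ : ℕ∞) (fun y => w t y j) := fun j =>
    (hw j).comp (contDiff_const.prodMk contDiff_id)
  -- the flux vector field
  set V : Fin d → (Fin d → ℝ) → ℝ := fun i y =>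
    -(ρ t y * w t y i * (∑ j, (w t y j) ^ 2) / 2)
    + μ * ((∑ j, w t y j * pd i (fun z => ρ t z * w t z j) y)
        - (∑ j, (w t y j) ^ 2) / 2 * pd i (ρ t) y)
    + 2 * lam * ∑ j, ρ t y * w t y j *
        ((pd i (fun z => w t z j) y + pd j (fun z => w t z i) y) / 2) with hVdef
  have hVc : ∀ i, ContDiff ℝ (⊤ : ℕ∞) (V i) := by
    intro i
    apply ContDiff.add
    apply ContDiff.add
    · exact ((hRt.mul (hWt i)).mul (ContDiff.sum fun j _ => (hWt j).pow 2)).div_const 2 |>.neg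
    · refine contDiff_const.mul (ContDiff.sub ?_ ?_)
      · exact ContDiff.sum fun j _ => (hWt j).mul (contDiff_pd (hRt.mul (hWt j)) i)
      · exact ((ContDiff.sum fun j _ => (hWt j).pow 2).div_const 2).mul (contDiff_pd hRt i)
    · refine contDiff_const.mul (ContDiff.sum fun j _ => ?_)
      exact (hRt.mul (hWt j)).mul
        (((contDiff_pd (hWt j) i).add (contDiff_pd (hWt i) j)).div_const 2)
  have hWtj : ∀ j x k, (fun y => w t y j) (x + Pi.single k 1) = (fun y => w t y j) x := by
    intro j x k
    show w t (x + Pi.single k 1) j = w t x j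
    rw [hwper]
  have hVper : ∀ i x k, V i (x + Pi.single k 1) = V i x := by
    intro i x k
    have e1 : ρ t (x + Pi.single k 1) = ρ t x := hper t x k
    have e2 : ∀ j, w t (x + Pi.single k 1) j = w t x j := fun j => by rw [hwper]
    have e3 : ∀ (j i' : Fin d), pd i' (fun z => w t z j) (x + Pi.single k 1)
        = pd i' (fun z => w t z j) x := fun j i' => pd_periodic (hWt j) (hWtj j) i' x k
    have e4 : ∀ i' : Fin d, pd i' (ρ t) (x + Pi.single k 1) = pd i' (ρ t) x := fun i' =>
      pd_periodic hRt (hper t) i' x k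
    have e5 : ∀ (j i' : Fin d), pd i' (fun z => ρ t z * w t z j) (x + Pi.single k 1)
        = pd i' (fun z => ρ t z * w t z j) x := fun j i' =>
      pd_periodic (hRt.mul (hWt j)) (fun y k' => by
        show ρ t (y + Pi.single k' 1) * w t (y + Pi.single k' 1) j = ρ t y * w t y j
        rw [hper, hwper]) i' x k
    simp only [hVdef, e1, e2, e3, e4, e5]
  -- the energy density as a joint function
  set F : ℝ × (Fin d → ℝ) → ℝ := fun p => ρ p.1 p.2 * (∑ j, (w p.1 p.2 j) ^ 2) / 2 with hFdef
  have hF : ContDiff ℝ (⊤ : ℕ∞) F :=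
    (hρ.mul (ContDiff.sum fun j _ => (hw j).pow 2)).div_const 2
  have hDI : deriv (fun s => ∫ x in box d, ρ s x * (∑ j, (w s x j) ^ 2) / 2) t
      = ∫ x in box d, fderiv ℝ F (t, x) (1, 0) := (hasDerivAt_integral_box hF t).deriv
  -- pointwise identity
  have claim : ∀ x : Fin d → ℝ, fderiv ℝ F (t, x) (1, 0)
      = ∑ i, pd i (V i) x
        - (2 * lam * (ρ t x * ∑ i, ∑ j,
            ((pd i (fun z => w t z j) x + pd j (fun z => w t z i) x) / 2) ^ 2)
          + μ * (ρ t x * ∑ i, ∑ j, (pd i (fun z => w t z j) x) ^ 2)) := by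
    intro x
    have hSf : ContDiff ℝ (⊤ : ℕ∞) (fun y : Fin d → ℝ => ∑ j, w t y j ^ 2) :=
      ContDiff.sum fun j _ => (hWt j).pow 2
    have hRW : ∀ j, ContDiff ℝ (⊤ : ℕ∞) (fun y => ρ t y * w t y j) := fun j => hRt.mul (hWt j)
    have hDf : ∀ i j, ContDiff ℝ (⊤ : ℕ∞) (fun y =>
        (pd i (fun z => w t z j) y + pd j (fun z => w t z i) y) / 2) := fun i j =>
      ((contDiff_pd (hWt j) i).add (contDiff_pd (hWt i) j)).div_const 2
    -- time derivatives
    have hAx : HasDerivAt (fun s => ρ s x) (deriv (fun s => ρ s x) t) t :=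
      (hasDerivAt_slice hρ t x).differentiableAt.hasDerivAt
    have hBx : ∀ j, HasDerivAt (fun s => w s x j) (deriv (fun s => w s x j) t) t := fun j =>
      (hasDerivAt_slice (hw j) t x).differentiableAt.hasDerivAt
    have hSd : HasDerivAt (fun s => ∑ j, w s x j ^ 2)
        (∑ j, 2 * w t x j * deriv (fun s => w s x j) t) t := by
      refine HasDerivAt.fun_sum fun j _ => ?_
      have h := (hBx j).fun_pow 2
      refine h.congr_deriv ?_
      norm_num
    have hld : fderiv ℝ F (t, x) (1, 0)
        = (deriv (fun s => ρ s x) t * (∑ j, w t x j ^ 2)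
           + ρ t x * (∑ j, 2 * w t x j * deriv (fun s => w s x j) t)) / 2 := by
      rw [← deriv_slice hF t x]
      exact ((hAx.mul hSd).div_const 2).deriv
    have hprod : ∀ j, deriv (fun s => ρ s x * w s x j) t
        = deriv (fun s => ρ s x) t * w t x j + ρ t x * deriv (fun s => w s x j) t :=
      fun j => (hAx.mul (hBx j)).deriv
    -- spatial expansions
    have hPexp : ∀ (i j : Fin d), pd i (fun z => ρ t z * w t z j) x
        = pd i (ρ t) x * w t x j + ρ t x * pd i (fun z => w t z j) x :=
      fun i j => pd_mul hRt (hWt j) i x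
    have hSexp : ∀ i : Fin d, pd i (fun y => ∑ j, w t y j ^ 2) x
        = ∑ j, 2 * w t x j * pd i (fun z => w t z j) x := by
      intro i
      rw [pd_sum Finset.univ (fun j => (hWt j).pow 2)]
      exact Finset.sum_congr rfl fun j _ => pd_sq (hWt j) i x
    have hU : ∀ (i j : Fin d), pd i (fun y => ρ t y * w t y j * w t y i) x
        = (pd i (ρ t) x * w t x j + ρ t x * pd i (fun z => w t z j) x) * w t x i
          + ρ t x * w t x j * pd i (fun z => w t z i) x := by
      intro i j
      rw [pd_mul (hRW j) (hWt i), pd_mul hRt (hWt j)]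
    have hDexp : ∀ (i j : Fin d), pd i (fun y =>
          (pd i (fun z => w t z j) y + pd j (fun z => w t z i) y) / 2) x
        = (pd i (pd i (fun z => w t z j)) x + pd i (pd j (fun z => w t z i)) x) / 2 := by
      intro i j
      rw [pd_div_const ((contDiff_pd (hWt j) i).add (contDiff_pd (hWt i) j)),
        pd_add (contDiff_pd (hWt j) i) (contDiff_pd (hWt i) j)]
    have hT : ∀ (i j : Fin d), pd i (fun y => ρ t y *
          ((pd i (fun z => w t z j) y + pd j (fun z => w t z i) y) / 2)) x
        = pd i (ρ t) x * ((pd i (fun z => w t z j) x + pd j (fun z => w t z i) x) / 2)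
          + ρ t x * ((pd i (pd i (fun z => w t z j)) x + pd i (pd j (fun z => w t z i)) x) / 2) := by
      intro i j
      rw [pd_mul hRt (hDf i j), hDexp i j]
    -- the continuity equation, solved for the time derivative
    have ha : deriv (fun s => ρ s x) t
        = μ * (∑ i, pd i (pd i (ρ t)) x)
          - ∑ i, (pd i (ρ t) x * w t x i + ρ t x * pd i (fun z => w t z i) x) := by
      have h := hcont t x
      simp only [lap] at h
      have h2 : (∑ i, pd i (fun y => ρ t y * w t y i) x)
          = ∑ i, (pd i (ρ t) x * w t x i + ρ t x * pd i (fun z => w t z i) x) :=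
        Finset.sum_congr rfl fun i _ => hPexp i i
      rw [h2] at h
      linarith
    -- the momentum equation, solved for ρ ∂ₜ w
    have hb : ∀ j, ρ t x * deriv (fun s => w s x j) t
        = μ * lap (fun y => ρ t y * w t y j) x
          + 2 * lam * (∑ i, (pd i (ρ t) x
              * ((pd i (fun z => w t z j) x + pd j (fun z => w t z i) x) / 2)
              + ρ t x * ((pd i (pd i (fun z => w t z j)) x
                  + pd i (pd j (fun z => w t z i)) x) / 2)))
          - (∑ i, ((pd i (ρ t) x * w t x j + ρ t x * pd i (fun z => w t z j) x) * w t x i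
              + ρ t x * w t x j * pd i (fun z => w t z i) x))
          - deriv (fun s => ρ s x) t * w t x j := by
      intro j
      have h := hmom t x j
      rw [hprod j] at h
      have h2 : (∑ i, pd i (fun y => ρ t y * w t y j * w t y i) x)
          = ∑ i, ((pd i (ρ t) x * w t x j + ρ t x * pd i (fun z => w t z j) x) * w t x i
              + ρ t x * w t x j * pd i (fun z => w t z i) x) :=
        Finset.sum_congr rfl fun i _ => hU i j
      have h3 : (∑ i, pd i (fun y => ρ t y *
            ((pd i (fun z => w t z j) y + pd j (fun z => w t z i) y) / 2)) x)
          = ∑ i, (pd i (ρ t) x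
              * ((pd i (fun z => w t z j) x + pd j (fun z => w t z i) x) / 2)
              + ρ t x * ((pd i (pd i (fun z => w t z j)) x
                  + pd i (pd j (fun z => w t z i)) x) / 2)) :=
        Finset.sum_congr rfl fun i _ => hT i j
      rw [h2, h3] at h
      linarith
    -- expansion of the divergence of V
    have hexp : ∀ i, pd i (V i) x =
        -((pd i (ρ t) x * w t x i + ρ t x * pd i (fun z => w t z i) x) * (∑ j, w t x j ^ 2)
            + ρ t x * w t x i * (∑ j, 2 * w t x j * pd i (fun z => w t z j) x)) / 2
        + μ * ((∑ j, (pd i (fun z => w t z j) x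
              * (pd i (ρ t) x * w t x j + ρ t x * pd i (fun z => w t z j) x)
              + w t x j * pd i (pd i (fun z => ρ t z * w t z j)) x))
            - ((∑ j, 2 * w t x j * pd i (fun z => w t z j) x) / 2 * pd i (ρ t) x
              + (∑ j, w t x j ^ 2) / 2 * pd i (pd i (ρ t)) x))
        + 2 * lam * (∑ j, ((pd i (ρ t) x * w t x j + ρ t x * pd i (fun z => w t z j) x)
              * ((pd i (fun z => w t z j) x + pd j (fun z => w t z i) x) / 2)
            + ρ t x * w t x j * ((pd i (pd i (fun z => w t z j)) x
                + pd i (pd j (fun z => w t z i)) x) / 2))) := by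
      intro i
      have cP : ∀ j, ContDiff ℝ (⊤ : ℕ∞) (fun y => w t y j * pd i (fun z => ρ t z * w t z j) y) :=
        fun j => (hWt j).mul (contDiff_pd (hRW j) i)
      have cSum1 : ContDiff ℝ (⊤ : ℕ∞) (fun y => ∑ j, w t y j * pd i (fun z => ρ t z * w t z j) y) :=
        ContDiff.sum fun j _ => cP j
      have cS2R : ContDiff ℝ (⊤ : ℕ∞) (fun y => (∑ j, w t y j ^ 2) / 2 * pd i (ρ t) y) :=
        (hSf.div_const 2).mul (contDiff_pd hRt i)
      have c2in : ContDiff ℝ (⊤ : ℕ∞) (fun y => (∑ j, w t y j * pd i (fun z => ρ t z * w t z j) y)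
          - (∑ j, w t y j ^ 2) / 2 * pd i (ρ t) y) := cSum1.sub cS2R
      have cT3j : ∀ j, ContDiff ℝ (⊤ : ℕ∞) (fun y => ρ t y * w t y j
          * ((pd i (fun z => w t z j) y + pd j (fun z => w t z i) y) / 2)) :=
        fun j => (hRW j).mul (hDf i j)
      have cSum3 : ContDiff ℝ (⊤ : ℕ∞) (fun y => ∑ j, ρ t y * w t y j
          * ((pd i (fun z => w t z j) y + pd j (fun z => w t z i) y) / 2)) :=
        ContDiff.sum fun j _ => cT3j j
      have c1 : ContDiff ℝ (⊤ : ℕ∞) (fun y => -(ρ t y * w t y i * (∑ j, w t y j ^ 2) / 2)) :=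
        (((hRW i).mul hSf).div_const 2).neg
      have c2 : ContDiff ℝ (⊤ : ℕ∞) (fun y => μ * ((∑ j, w t y j * pd i (fun z => ρ t z * w t z j) y)
          - (∑ j, w t y j ^ 2) / 2 * pd i (ρ t) y)) := contDiff_const.mul c2in
      have hmulP : ∀ j, pd i (fun y => w t y j * pd i (fun z => ρ t z * w t z j) y) x
          = pd i (fun z => w t z j) x * pd i (fun z => ρ t z * w t z j) x
            + w t x j * pd i (pd i (fun z => ρ t z * w t z j)) x :=
        fun j => pd_mul (hWt j) (contDiff_pd (hRW j) i) i x
      have hmul3 : ∀ j, pd i (fun y => ρ t y * w t y j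
            * ((pd i (fun z => w t z j) y + pd j (fun z => w t z i) y) / 2)) x
          = pd i (fun y => ρ t y * w t y j) x
              * ((pd i (fun z => w t z j) x + pd j (fun z => w t z i) x) / 2)
            + ρ t x * w t x j * pd i (fun y =>
              (pd i (fun z => w t z j) y + pd j (fun z => w t z i) y) / 2) x :=
        fun j => pd_mul (hRW j) (hDf i j) i x
      simp only [hVdef]
      simp only [pd_add (c1.add c2) (contDiff_const.mul cSum3), pd_add c1 c2, pd_neg,
        pd_div_const ((hRW i).mul hSf), pd_mul (hRW i) hSf,
        pd_const_mul c2in μ, pd_sub cSum1 cS2R,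
        pd_sum Finset.univ (fun j => cP j),
        pd_const_mul cSum3 (2 * lam),
        pd_sum Finset.univ (fun j => cT3j j),
        pd_mul (hSf.div_const 2) (contDiff_pd hRt i),
        pd_div_const hSf,
        hmulP, hmul3, hDexp, hPexp, hSexp, pd_mul hRt (hWt i)]
      ring
    have hpdV : (∑ i, pd i (V i) x) = ∑ i,
        (-((pd i (ρ t) x * w t x i + ρ t x * pd i (fun z => w t z i) x) * (∑ j, w t x j ^ 2)
            + ρ t x * w t x i * (∑ j, 2 * w t x j * pd i (fun z => w t z j) x)) / 2
        + μ * ((∑ j, (pd i (fun z => w t z j) x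
              * (pd i (ρ t) x * w t x j + ρ t x * pd i (fun z => w t z j) x)
              + w t x j * pd i (pd i (fun z => ρ t z * w t z j)) x))
            - ((∑ j, 2 * w t x j * pd i (fun z => w t z j) x) / 2 * pd i (ρ t) x
              + (∑ j, w t x j ^ 2) / 2 * pd i (pd i (ρ t)) x))
        + 2 * lam * (∑ j, ((pd i (ρ t) x * w t x j + ρ t x * pd i (fun z => w t z j) x)
              * ((pd i (fun z => w t z j) x + pd j (fun z => w t z i) x) / 2)
            + ρ t x * w t x j * ((pd i (pd i (fun z => w t z j)) x
                + pd i (pd j (fun z => w t z i)) x) / 2)))) :=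
      Finset.sum_congr rfl fun i _ => hexp i
    rw [hld, hpdV]
    exact energy_algebra μ lam (ρ t x) (deriv (fun s => ρ s x) t) (∑ j, w t x j ^ 2)
      (fun j => w t x j) (fun j => deriv (fun s => w s x j) t) (fun i => pd i (ρ t) x)
      (fun i => pd i (pd i (ρ t)) x) (fun j => lap (fun y => ρ t y * w t y j) x)
      (fun i j => pd i (fun z => w t z j) x)
      (fun i j => pd i (pd i (fun z => ρ t z * w t z j)) x)
      (fun i j => pd i (pd i (fun z => w t z j)) x)
      (fun i j => pd i (pd j (fun z => w t z i)) x)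
      rfl ha (fun j => rfl) hb
  -- integrate
  have hdiv0 : ∫ x in box d, ∑ i, pd i (V i) x = 0 :=
    integral_divergence_zero V hVc hVper
  have hcD : Continuous fun x => ρ t x * ∑ i, ∑ j,
      ((pd i (fun z => w t z j) x + pd j (fun z => w t z i) x) / 2) ^ 2 :=
    (hRt.mul (ContDiff.sum fun i _ => ContDiff.sum fun j _ =>
      (((contDiff_pd (hWt j) i).add (contDiff_pd (hWt i) j)).div_const 2).pow 2)).continuous
  have hcG : Continuous fun x => ρ t x * ∑ i, ∑ j, (pd i (fun z => w t z j) x) ^ 2 :=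
    (hRt.mul (ContDiff.sum fun i _ => ContDiff.sum fun j _ =>
      (contDiff_pd (hWt j) i).pow 2)).continuous
  have hcV : Continuous fun x => ∑ i, pd i (V i) x :=
    (ContDiff.sum fun i _ => contDiff_pd (hVc i) i).continuous
  rw [hDI]
  rw [MeasureTheory.setIntegral_congr_fun measurableSet_box fun x _ => claim x]
  rw [MeasureTheory.integral_sub
    (hcV.continuousOn.integrableOn_compact isCompact_box)
    (((continuous_const.fun_mul hcD).fun_add (continuous_const.fun_mul hcG)).continuousOn.integrableOn_compact
      isCompact_box)]
  rw [hdiv0]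
  rw [MeasureTheory.integral_add
    ((continuous_const.fun_mul hcD).continuousOn.integrableOn_compact isCompact_box)
    ((continuous_const.fun_mul hcG).continuousOn.integrableOn_compact isCompact_box)]
  rw [MeasureTheory.integral_const_mul, MeasureTheory.integral_const_mul]
  ring
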